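/- Let N ≥ 1, let c, τ > 0, let σ be the uniform probability measure on the unit sphere S^{N−1} of ℝ^N, and for R ≥ 0 define (T_R u)(x) := ∫_{S^{N−1}} u(x + R·y) dσ(y). For t > 0 let n(t) be the unique natural number m with m·τ < t ≤ (m+1)·τ and R(t) := c·(t − n(t)·τ). Let u : ℝ^N → ℝ be continuous and bounded, and define the causal diffusion v by v(x,0) := u(x) and v(x,t) := (T_{R(t)}((T_{cτ})^{n(t)} u))(x) for t > 0, where (T_{cτ})^{n(t)} denotes the n(t)-fold iterate. Then for every x ∈ ℝ^N, the map t ↦ v(x,t) is continuous on [0,∞); in particular v(x,0+) = u(x). -/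

import Mathlib

open MeasureTheory

/-- The uniform probability measure on the unit sphere of `ℝ^N`, viewed as a measure
on `ℝ^N` (the normalized surface measure, pushed forward along the inclusion). -/
noncomputable def sphereUniform (N : ℕ) : Measure (EuclideanSpace ℝ (Fin N)) :=
  ((volume : Measure (EuclideanSpace ℝ (Fin N))).toSphere Set.univ)⁻¹ •
    Measure.map (Subtype.val : Metric.sphere (0 : EuclideanSpace ℝ (Fin N)) 1 → _)
      (volume : Measure (EuclideanSpace ℝ (Fin N))).toSphere

/-- The spherical mean operator `(T_R u)(x) = ∫_{S^{N-1}} u (x + R y) dσ(y)`. -/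
noncomputable def sphMean (N : ℕ) (R : ℝ) (u : EuclideanSpace ℝ (Fin N) → ℝ)
    (x : EuclideanSpace ℝ (Fin N)) : ℝ :=
  ∫ y, u (x + R • y) ∂(sphereUniform N)
/-- For `t, τ > 0`, the unique `m ∈ ℕ` with `m τ < t ≤ (m+1) τ`. -/
noncomputable def stepIndex (τ t : ℝ) : ℕ := ⌈t / τ⌉₊ - 1

/-- The causal diffusion model with speed `c` and period `τ`:
`v(x,t) = (T_{R(t)} ((T_{cτ})^{n(t)} u)) x` for `t > 0` (where `n(t)` is the unique
natural number with `n(t) τ < t ≤ (n(t)+1) τ` and `R(t) = c (t - n(t) τ)`), and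
`v(x,0) = u(x)`. -/
noncomputable def causalDiffusion (N : ℕ) (c τ : ℝ) (u : EuclideanSpace ℝ (Fin N) → ℝ)
    (x : EuclideanSpace ℝ (Fin N)) (t : ℝ) : ℝ :=
  if t ≤ 0 then u x
  else sphMean N (c * (t - stepIndex τ t * τ)) ((sphMean N (c * τ))^[stepIndex τ t] u) x

/-! On each closed interval `[mτ, (m+1)τ]` the map `t ↦ v(x,t)` coincides with
`t ↦ T_{c(t-mτ)}((T_{cτ})^m u)(x)`: at the junction `t = (m+1)τ` both formulas give
`(T_{cτ})^{m+1} u (x)` because `T_0 = id`, and at `t = 0` both give `u x`. Each of these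
functions is continuous, since `(R, x) ↦ T_R w x` is a parametric integral of a jointly
continuous integrand over the compact sphere, which carries all the mass of `σ`. The intervals
form a locally finite closed cover of `[0, ∞)`, so the pieces glue to a continuous function. -/

open Set Filter Topology

variable {N : ℕ} {τ : ℝ}

instance [NeZero N] : IsProbabilityMeasure (sphereUniform N) := by
  constructor
  rw [sphereUniform, Measure.smul_apply, Measure.map_apply measurable_subtype_coe .univ,
    preimage_univ, smul_eq_mul, Measure.toSphere_apply_univ, finrank_euclideanSpace_fin]
  exact ENNReal.inv_mul_cancel
    (mul_ne_zero (by simpa using NeZero.ne N) (Metric.measure_ball_pos _ _ one_pos).ne')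
    (ENNReal.mul_ne_top (ENNReal.natCast_ne_top N) measure_ball_lt_top.ne)

lemma ae_mem_sphere_sphereUniform :
    ∀ᵐ y ∂(sphereUniform N), y ∈ Metric.sphere (0 : EuclideanSpace ℝ (Fin N)) 1 := by
  refine Measure.ae_smul_measure ?_ _
  have h := ae_map_mem_range (Subtype.val : Metric.sphere (0 : EuclideanSpace ℝ (Fin N)) 1 → _)
    (by rw [Subtype.range_coe]; exact Metric.isClosed_sphere.measurableSet) volume.toSphere
  rwa [Subtype.range_coe] at h

@[simp]
lemma sphMean_zero [NeZero N] (w : EuclideanSpace ℝ (Fin N) → ℝ) : sphMean N 0 w = w := by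
  ext x
  simp [sphMean]

lemma continuous_sphMean_uncurry [NeZero N] {w : EuclideanSpace ℝ (Fin N) → ℝ}
    (hw : Continuous w) :
    Continuous fun p : ℝ × EuclideanSpace ℝ (Fin N) => sphMean N p.1 w p.2 := by
  have h := continuous_parametric_integral_of_continuous (μ := sphereUniform N)
    (f := fun (p : ℝ × EuclideanSpace ℝ (Fin N)) y => w (p.2 + p.1 • y)) (by fun_prop)
    (isCompact_sphere 0 1)
  simpa only [sphMean, Measure.restrict_eq_self_of_ae_mem ae_mem_sphere_sphereUniform] using h

lemma continuous_sphMean_iterate [NeZero N] {w : EuclideanSpace ℝ (Fin N) → ℝ}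
    (hw : Continuous w) (R : ℝ) (m : ℕ) : Continuous ((sphMean N R)^[m] w) :=
  Function.Iterate.rec Continuous hw
    (fun _ hv => (continuous_sphMean_uncurry hv).comp (Continuous.prodMk_right R)) m

lemma stepIndex_eq_of_mem_Ioc (hτ : 0 < τ) {t : ℝ} {m : ℕ}
    (ht : t ∈ Ioc (m * τ) ((m + 1) * τ)) :
    stepIndex τ t = m := by
  have hceil : ⌈t / τ⌉₊ = m + 1 := by
    rw [Nat.ceil_eq_iff (by omega : m + 1 ≠ 0), Nat.add_sub_cancel, lt_div_iff₀ hτ,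
      div_le_iff₀ hτ]
    exact_mod_cast ht
  simp [stepIndex, hceil]

lemma iUnion_Icc_natCast_mul (hτ : 0 < τ) : ⋃ m : ℕ, Icc (m * τ) ((m + 1) * τ) = Ici 0 := by
  refine Subset.antisymm (iUnion_subset fun m t ht => le_trans (by positivity) ht.1) ?_
  intro t (ht : 0 ≤ t)
  refine mem_iUnion.2 ⟨⌊t / τ⌋₊, ?_, ?_⟩
  · exact (le_div_iff₀ hτ).1 (Nat.floor_le (div_nonneg ht hτ.le))
  · exact ((div_le_iff₀ hτ).1 (Nat.lt_floor_add_one _).le)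

lemma locallyFinite_Icc_natCast_mul (hτ : 0 < τ) :
    LocallyFinite fun m : ℕ => Icc (m * τ) ((m + 1) * τ) := by
  have hlow : Tendsto (fun m : ℤ => (m : ℝ) * τ) atTop atTop :=
    tendsto_intCast_atTop_atTop.atTop_mul_const hτ
  have hup : Tendsto (fun m : ℤ => ((m : ℝ) + 1) * τ) atBot atBot :=
    (tendsto_atBot_add_const_right _ 1 (tendsto_intCast_atBot_iff.2 tendsto_id)).atBot_mul_const hτ
  have h := locallyFinite_Icc_of_tendsto hlow hup
  simpa [Function.comp_def] using h.comp_injective Nat.cast_injective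

section CausalDiffusion
variable {c : ℝ} {u : EuclideanSpace ℝ (Fin N) → ℝ} (x : EuclideanSpace ℝ (Fin N))

lemma causalDiffusion_of_mem_Ioc (hτ : 0 < τ) {t : ℝ} {m : ℕ}
    (ht : t ∈ Ioc (m * τ) ((m + 1) * τ)) :
    causalDiffusion N c τ u x t = sphMean N (c * (t - m * τ)) ((sphMean N (c * τ))^[m] u) x := by
  have ht0 : 0 < t := lt_of_le_of_lt (by positivity) ht.1
  simp [causalDiffusion, ht0.not_ge, stepIndex_eq_of_mem_Ioc hτ ht]

lemma causalDiffusion_eqOn_Icc [NeZero N] (hτ : 0 < τ) (m : ℕ) :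
    EqOn (causalDiffusion N c τ u x)
      (fun t => sphMean N (c * (t - m * τ)) ((sphMean N (c * τ))^[m] u) x)
      (Icc (m * τ) ((m + 1) * τ)) := by
  intro t ht
  rcases ht.1.eq_or_lt with rfl | hlt
  · cases m with
    | zero => simp [causalDiffusion]
    | succ k =>
      -- at `t = (k+1)τ` the definition still uses the `k`-th step, with full radius `cτ`
      rw [causalDiffusion_of_mem_Ioc x hτ (m := k) ⟨by push_cast; linarith, by push_cast; rfl⟩]
      simp [Function.iterate_succ_apply', add_mul]
  · exact causalDiffusion_of_mem_Ioc x hτ ⟨hlt, ht.2⟩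

lemma continuousOn_causalDiffusion [NeZero N] (hτ : 0 < τ) (hu : Continuous u) :
    ContinuousOn (causalDiffusion N c τ u x) (Ici 0) := by
  rw [← iUnion_Icc_natCast_mul hτ]
  refine (locallyFinite_Icc_natCast_mul hτ).continuousOn_iUnion (fun _ => isClosed_Icc) fun m => ?_
  refine ContinuousOn.congr ?_ (causalDiffusion_eqOn_Icc x hτ m)
  exact ((continuous_sphMean_uncurry (continuous_sphMean_iterate hu _ m)).comp
    (by fun_prop : Continuous fun t : ℝ => (c * (t - m * τ), x))).continuousOn

end CausalDiffusion

theorem stmt_15_general (N : ℕ) (hN : 1 ≤ N) (c τ : ℝ) (hτ : 0 < τ)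
    (u : EuclideanSpace ℝ (Fin N) → ℝ) (huc : Continuous u)
    (x : EuclideanSpace ℝ (Fin N)) :
    ContinuousOn (fun t => causalDiffusion N c τ u x t) (Set.Ici 0) ∧
      Filter.Tendsto (fun t => causalDiffusion N c τ u x t)
        (nhdsWithin 0 (Set.Ioi 0)) (nhds (u x)) := by
  have : NeZero N := ⟨by omega⟩
  have hcont := continuousOn_causalDiffusion (c := c) x hτ huc
  refine ⟨hcont, ?_⟩
  have h0 : causalDiffusion N c τ u x 0 = u x := by simp [causalDiffusion]
  simpa [h0] using ((hcont 0 self_mem_Ici).mono Ioi_subset_Ici_self).tendsto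

/-- For continuous bounded initial data, the causal diffusion `t ↦ v(x,t)` is
continuous on `[0,∞)`; in particular `v(x,0+) = u(x)`. -/
theorem stmt_15 (N : ℕ) (hN : 1 ≤ N) (c τ : ℝ) (hc : 0 < c) (hτ : 0 < τ)
    (u : EuclideanSpace ℝ (Fin N) → ℝ) (huc : Continuous u)
    (hub : ∃ C : ℝ, ∀ x, |u x| ≤ C) (x : EuclideanSpace ℝ (Fin N)) :
    ContinuousOn (fun t => causalDiffusion N c τ u x t) (Set.Ici 0) ∧
      Filter.Tendsto (fun t => causalDiffusion N c τ u x t)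
        (nhdsWithin 0 (Set.Ioi 0)) (nhds (u x)) :=
  stmt_15_general N hN c τ hτ u huc x
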